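/- arXiv:0911.0522 — 8 statements merged into one kernel-verified Lean document; each statement's English description precedes it below -/
import Mathlib

section
/- Suppose the sequences (a_n) and (b_n) of positive reals satisfy, for n ≥ n_0, the recursions a_{n+1} = (1-η_n)^2 a_n + θ^2 b_n and b_{n+1} = (1-η_{n+1}) b_n + η_{n+1} a_{n+1}, where η_n ∈ (0,1) with η_n → 0, θ > 0, a_{n_0} ≥ 0 and b_{n_0} > 0. Then there exists m_0 ≥ n_0 such that the sequence (b_n)_{n ≥ m_0} is strictly increasing. -/
/-!
Since `b (n+1) - b n = η (n+1) * (a (n+1) - b n)`, the sequence `b` increases at `n` exactly when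
`b n < a (n+1)`. Once `η` is so small that `(1 - η n)^2 ≥ 1 - θ^2/2`, this condition propagates:
`b (n+1)` is a proper convex combination of `b n` and `a (n+1)`, so it lies below `a (n+1)`, and then
`a (n+2) ≥ (1 - η)^2 a (n+1) + θ^2 b (n+1) > b (n+1)`.
The condition must hold at some late index: otherwise `b` is eventually nonincreasing with `a ≤ b`,
while `a (n+1) ≥ a n + θ^2/2 * b n`, so the ratio `a n / b n ≤ 1` would grow by `θ^2/2` at each step.
-/

open Filter Topology

theorem exists_lt_of_forall_add_le {x : ℕ → ℝ} {δ : ℝ} (hδ : 0 < δ) {N : ℕ}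
    (h : ∀ n ≥ N, x n + δ ≤ x (n + 1)) (c : ℝ) : ∃ n ≥ N, c < x n := by
  have hgrow : ∀ k : ℕ, x N + k * δ ≤ x (N + k) := by
    intro k
    induction k with
    | zero => simp
    | succ k ih =>
      have := h (N + k) (Nat.le_add_right N k)
      rw [← add_assoc]
      push_cast
      linarith
  obtain ⟨k, hk⟩ := exists_nat_gt ((c - x N) / δ)
  refine ⟨N + k, Nat.le_add_right N k, ?_⟩
  have : c - x N < k * δ := (div_lt_iff₀ hδ).1 hk
  linarith [hgrow k]

theorem div_add_le_div_of_add_mul_le {x y x' y' δ : ℝ} (hy' : 0 < y') (hyy' : y' ≤ y)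
    (hx' : 0 ≤ x') (h : x + δ * y ≤ x') : x / y + δ ≤ x' / y' := by
  have hy : 0 < y := hy'.trans_le hyy'
  calc x / y + δ = (x + δ * y) / y := by field_simp
    _ ≤ x' / y := by gcongr
    _ ≤ x' / y' := div_le_div_of_nonneg_left hx' hy' hyy'

theorem eventually_one_sub_le_one_sub_sq {η : ℕ → ℝ} (hη : Tendsto η atTop (𝓝 0)) {c : ℝ}
    (hc : 0 < c) : ∀ᶠ n in atTop, 1 - c ≤ (1 - η n) ^ 2 := by
  have hlim : Tendsto (fun n => (1 - η n) ^ 2) atTop (𝓝 1) := by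
    simpa using ((tendsto_const_nhds (x := (1 : ℝ))).sub hη).pow 2
  exact hlim.eventually_const_le (by linarith)

/-- The expected Adaptive Metropolis recursions, from the index `n₀` on. -/
structure AMRecursion (a b η : ℕ → ℝ) (θ : ℝ) (n₀ : ℕ) : Prop where
  step_mem : ∀ n, 0 < η n ∧ η n < 1
  rec_a : ∀ n ≥ n₀, a (n + 1) = (1 - η n) ^ 2 * a n + θ ^ 2 * b n
  rec_b : ∀ n ≥ n₀, b (n + 1) = (1 - η (n + 1)) * b n + η (n + 1) * a (n + 1)

namespace AMRecursion

variable {a b η : ℕ → ℝ} {θ : ℝ} {n₀ n : ℕ}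

theorem b_succ_sub (h : AMRecursion a b η θ n₀) (hn : n₀ ≤ n) :
    b (n + 1) - b n = η (n + 1) * (a (n + 1) - b n) := by
  rw [h.rec_b n hn]; ring

theorem b_succ_sub_a_succ (h : AMRecursion a b η θ n₀) (hn : n₀ ≤ n) :
    b (n + 1) - a (n + 1) = (1 - η (n + 1)) * (b n - a (n + 1)) := by
  rw [h.rec_b n hn]; ring

theorem b_lt_b_succ_iff (h : AMRecursion a b η θ n₀) (hn : n₀ ≤ n) :
    b n < b (n + 1) ↔ b n < a (n + 1) := by
  rw [← sub_pos, h.b_succ_sub hn, mul_pos_iff_of_pos_left (h.step_mem _).1, sub_pos]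

theorem nonneg_pos (h : AMRecursion a b η θ n₀) (ha0 : 0 ≤ a n₀) (hb0 : 0 < b n₀) :
    ∀ n ≥ n₀, 0 ≤ a n ∧ 0 < b n := by
  refine Nat.le_induction ⟨ha0, hb0⟩ fun n hn ⟨ha, hb⟩ => ?_
  obtain ⟨hη0, hη1⟩ := h.step_mem (n + 1)
  have ha' : 0 ≤ a (n + 1) := by rw [h.rec_a n hn]; positivity
  refine ⟨ha', ?_⟩
  rw [h.rec_b n hn]
  have : 0 < (1 - η (n + 1)) * b n := mul_pos (by linarith) hb
  nlinarith

theorem a_succ_ge (h : AMRecursion a b η θ n₀) (hn : n₀ ≤ n) (ha : 0 ≤ a n) (hab : a n ≤ b n)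
    (hηn : 1 - θ ^ 2 / 2 ≤ (1 - η n) ^ 2) : a n + θ ^ 2 / 2 * b n ≤ a (n + 1) := by
  rw [h.rec_a n hn]
  nlinarith [mul_le_mul_of_nonneg_right hηn ha, sq_nonneg θ]

theorem b_lt_a_succ_succ (h : AMRecursion a b η θ n₀) (hn : n₀ ≤ n) (hb : 0 ≤ b (n + 1))
    (hηn : 1 ≤ (1 - η (n + 1)) ^ 2 + θ ^ 2) (hba : b n < a (n + 1)) :
    b (n + 1) < a (n + 1 + 1) := by
  obtain ⟨hη0, hη1⟩ := h.step_mem (n + 1)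
  have hlt : b (n + 1) < a (n + 1) := by
    have := h.b_succ_sub_a_succ hn
    nlinarith [mul_pos (sub_pos.2 hη1) (sub_pos.2 hba)]
  rw [h.rec_a (n + 1) (by omega)]
  nlinarith [mul_lt_mul_of_pos_left hlt (pow_pos (sub_pos.2 hη1) 2)]

theorem exists_b_lt_a_succ (h : AMRecursion a b η θ n₀) (hθ : θ ≠ 0)
    (hpos : ∀ n ≥ n₀, 0 ≤ a n ∧ 0 < b n) {N : ℕ} (hN : n₀ ≤ N)
    (hηN : ∀ n ≥ N, 1 - θ ^ 2 / 2 ≤ (1 - η n) ^ 2) : ∃ n ≥ N, b n < a (n + 1) := by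
  by_contra! hbad
  have hab : ∀ n ≥ N, a (n + 1) ≤ b (n + 1) := fun n hn => by
    have := h.b_succ_sub_a_succ (hN.trans hn)
    nlinarith [(h.step_mem (n + 1)).2, hbad n hn]
  have hb_anti : ∀ n ≥ N, b (n + 1) ≤ b n := fun n hn => by
    have := h.b_succ_sub (hN.trans hn)
    nlinarith [(h.step_mem (n + 1)).1, hbad n hn]
  have hratio : ∀ n ≥ N, a (n + 1) / b (n + 1) + θ ^ 2 / 2 ≤ a (n + 1 + 1) / b (n + 1 + 1) :=
    fun n hn => by
      have hn₀ : n₀ ≤ n + 1 := by omega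
      exact div_add_le_div_of_add_mul_le (hpos _ (by omega)).2 (hb_anti _ (by omega))
        (hpos _ (by omega)).1
        (by linarith [h.a_succ_ge hn₀ (hpos _ hn₀).1 (hab n hn) (hηN _ (by omega))])
  obtain ⟨n, hn, hgt⟩ := exists_lt_of_forall_add_le (by positivity) hratio 1
  have hbn := (hpos (n + 1) (by omega)).2
  rw [lt_div_iff₀ hbn, one_mul] at hgt
  exact (hab n hn).not_gt hgt

end AMRecursion

/-- If the sequences `a`, `b` of reals satisfy the coupled recursions
`a (n+1) = (1-η n)^2 * a n + θ^2 * b n` and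
`b (n+1) = (1-η (n+1)) * b n + η (n+1) * a (n+1)` for `n ≥ n₀`,
with `η n ∈ (0,1)`, `η n → 0`, `θ > 0`, `a n₀ ≥ 0` and `b n₀ > 0`,
then there is `m₀ ≥ n₀` such that `(b n)` is strictly increasing for `n ≥ m₀`. -/
theorem am_tail_increasing (a b η : ℕ → ℝ) (θ : ℝ) (n₀ : ℕ)
    (hη : ∀ n, 0 < η n ∧ η n < 1)
    (hηlim : Filter.Tendsto η Filter.atTop (nhds 0))
    (hθ : 0 < θ)
    (ha0 : 0 ≤ a n₀) (hb0 : 0 < b n₀)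
    (hreca : ∀ n ≥ n₀, a (n + 1) = (1 - η n) ^ 2 * a n + θ ^ 2 * b n)
    (hrecb : ∀ n ≥ n₀, b (n + 1) = (1 - η (n + 1)) * b n + η (n + 1) * a (n + 1)) :
    ∃ m₀ ≥ n₀, ∀ n ≥ m₀, b n < b (n + 1) := by
  have h : AMRecursion a b η θ n₀ := ⟨hη, hreca, hrecb⟩
  have hpos := h.nonneg_pos ha0 hb0
  obtain ⟨N, hN⟩ := eventually_atTop.1
    (eventually_one_sub_le_one_sub_sq hηlim (by positivity : 0 < θ ^ 2 / 2))
  obtain ⟨m, hm, hbm⟩ := h.exists_b_lt_a_succ hθ.ne' hpos (le_max_right N n₀)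
    fun n hn => hN n (le_of_max_le_left hn)
  have hmn₀ : n₀ ≤ m := (le_max_right N n₀).trans hm
  have hpersist : ∀ n ≥ m, b n < a (n + 1) := by
    refine Nat.le_induction hbm fun n hn ih => ?_
    have hηn := hN (n + 1) (by omega)
    exact h.b_lt_a_succ_succ (hmn₀.trans hn) (hpos _ (by omega)).2.le
      (by nlinarith [sq_nonneg θ]) ih
  exact ⟨m, hmn₀, fun n hn => (h.b_lt_b_succ_iff (hmn₀.trans hn)).2 (hpersist n hn)⟩
end

section
/- Let (η_n) ⊂ (0,1) be a sequence such that (η_n)_{n ≥ m'} is decreasing with η_n → 0, (η_{n+1}^{-1/2} - η_n^{-1/2})_{n ≥ m'} is decreasing, and ∑ η_n = ∞. Then the sequence of ratios (η_{n+1}/η_n)_{n ≥ m'} is increasing and converges to 1. -/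
/-!
Put `a n = η n ^ (-1/2)`, so that `η (n+1) / η n = (a n / a (n+1))²`. The hypothesis on the
increments says that `a` is concave from `m'` on, and a positive concave sequence is log-concave
(AM-GM), which makes the ratios increase. Since `a → ∞` while its increments stay between `0`
and the first increment, `a (n+1) / a n → 1`.
-/

open Filter Topology

lemma div_le_div_of_add_le_two_mul {x y z : ℝ} (hy : 0 < y) (hz : 0 < z)
    (h : x + z ≤ 2 * y) : x / y ≤ y / z := by
  rw [div_le_div_iff₀ hy hz]
  rcases le_or_gt 0 x with hx | hx
  · nlinarith [sq_nonneg (x - z)]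
  · nlinarith [mul_neg_of_neg_of_pos hx hz]

lemma div_eq_rpow_neg_half_div_sq {x y : ℝ} (hx : 0 < x) (hy : 0 < y) :
    y / x = (x ^ (-(1/2 : ℝ)) / y ^ (-(1/2 : ℝ))) ^ 2 := by
  rw [div_pow, ← Real.rpow_mul_natCast hx.le, ← Real.rpow_mul_natCast hy.le]
  norm_num [Real.rpow_neg_one, div_eq_mul_inv, mul_comm]

lemma tendsto_succ_div_self_of_abs_sub_le {a : ℕ → ℝ} {D : ℝ} (ha : Tendsto a atTop atTop)
    (hD : ∀ᶠ n in atTop, |a (n + 1) - a n| ≤ D) :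
    Tendsto (fun n => a (n + 1) / a n) atTop (𝓝 1) := by
  have hpos := ha.eventually_gt_atTop 0
  have hsmall : Tendsto (fun n => (a (n + 1) - a n) / a n) atTop (𝓝 0) := by
    refine squeeze_zero_norm' (a := fun n => D / a n) ?_ (tendsto_const_nhds.div_atTop ha)
    filter_upwards [hD, hpos] with n hn hn'
    rw [norm_div, Real.norm_eq_abs, Real.norm_of_nonneg hn'.le]
    gcongr
  have hone := hsmall.const_add 1
  rw [add_zero] at hone
  refine hone.congr' ?_
  filter_upwards [hpos] with n hn
  field_simp
  ring

theorem adapt_weight_ratio_general (η : ℕ → ℝ) (m' : ℕ)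
    (hη : ∀ n, 0 < η n ∧ η n < 1)
    (hdec : ∀ n ≥ m', η (n + 1) ≤ η n)
    (hlim : Filter.Tendsto η Filter.atTop (nhds 0))
    (hdiffdec : ∀ n ≥ m',
      η (n + 2) ^ (-(1/2 : ℝ)) - η (n + 1) ^ (-(1/2 : ℝ))
        ≤ η (n + 1) ^ (-(1/2 : ℝ)) - η n ^ (-(1/2 : ℝ))) :
    (∀ n ≥ m', η (n + 1) / η n ≤ η (n + 2) / η (n + 1)) ∧
      Filter.Tendsto (fun n => η (n + 1) / η n) Filter.atTop (nhds 1) := by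
  set a : ℕ → ℝ := fun n => η n ^ (-(1/2 : ℝ))
  have hpos : ∀ n, 0 < a n := fun n => Real.rpow_pos_of_pos (hη n).1 _
  have hratio : ∀ n, η (n + 1) / η n = (a n / a (n + 1)) ^ 2 := fun n =>
    div_eq_rpow_neg_half_div_sq (hη n).1 (hη (n + 1)).1
  have hmono : ∀ n ≥ m', a n ≤ a (n + 1) := fun n hn =>
    Real.rpow_le_rpow_of_nonpos (hη (n + 1)).1 (hdec n hn) (by norm_num)
  have hincr : AntitoneOn (fun n => a (n + 1) - a n) (Set.Ici m') :=
    antitoneOn_nat_Ici_of_succ_le hdiffdec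
  have htop : Tendsto a atTop atTop :=
    (tendsto_rpow_neg_nhdsGT_zero (by norm_num)).comp
      (tendsto_nhdsWithin_iff.2 ⟨hlim, .of_forall fun n => (hη n).1⟩)
  refine ⟨fun n hn => ?_, ?_⟩
  · rw [hratio, hratio]
    exact pow_le_pow_left₀ (div_nonneg (hpos n).le (hpos (n + 1)).le)
      (div_le_div_of_add_le_two_mul (hpos (n + 1)) (hpos (n + 2))
        (by linarith [hdiffdec n hn])) 2
  · have hD : ∀ᶠ n in atTop, |a (n + 1) - a n| ≤ a (m' + 1) - a m' := by
      filter_upwards [eventually_ge_atTop m'] with n hn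
      rw [abs_of_nonneg (sub_nonneg.2 (hmono n hn))]
      exact hincr (Set.mem_Ici.2 le_rfl) hn hn
    simpa [hratio, inv_div] using
      ((tendsto_succ_div_self_of_abs_sub_le htop hD).inv₀ one_ne_zero).pow 2

/-- If `(η n) ⊂ (0,1)` is decreasing to zero from index `m'`, with
`(η (n+1) ^ (-1/2) - η n ^ (-1/2))` decreasing from `m'`, and `∑ η n = ∞`,
then the ratios `η (n+1) / η n` form an increasing sequence (from `m'`)
converging to `1`. -/
theorem adapt_weight_ratio (η : ℕ → ℝ) (m' : ℕ)
    (hη : ∀ n, 0 < η n ∧ η n < 1)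
    (hdec : ∀ n ≥ m', η (n + 1) ≤ η n)
    (hlim : Filter.Tendsto η Filter.atTop (nhds 0))
    (hdiffdec : ∀ n ≥ m',
      η (n + 2) ^ (-(1/2 : ℝ)) - η (n + 1) ^ (-(1/2 : ℝ))
        ≤ η (n + 1) ^ (-(1/2 : ℝ)) - η n ^ (-(1/2 : ℝ)))
    (hdiv : ¬ Summable η) :
    (∀ n ≥ m', η (n + 1) / η n ≤ η (n + 2) / η (n + 1)) ∧
      Filter.Tendsto (fun n => η (n + 1) / η n) Filter.atTop (nhds 1) :=
  adapt_weight_ratio_general η m' hη hdec hlim hdiffdec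
end

section
/- Let (η_n) ⊂ (0,1) satisfy: (η_n)_{n ≥ m'} is decreasing with η_n → 0, (η_{n+1}^{-1/2} - η_n^{-1/2})_{n ≥ m'} is decreasing, and ∑ η_n = ∞. Then η_{n+1}^{-1/2} - η_n^{-1/2} → 0 as n → ∞. -/
/-- If `(η n) ⊂ (0,1)` is decreasing to zero from index `m'`, with
`(η (n+1) ^ (-1/2) - η n ^ (-1/2))` decreasing from `m'`, and `∑ η n = ∞`,
then `η (n+1) ^ (-1/2) - η n ^ (-1/2) → 0`. -/
theorem adapt_weight_sqrt_diff (η : ℕ → ℝ) (m' : ℕ)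
    (hη : ∀ n, 0 < η n ∧ η n < 1)
    (hdec : ∀ n ≥ m', η (n + 1) ≤ η n)
    (hlim : Filter.Tendsto η Filter.atTop (nhds 0))
    (hdiffdec : ∀ n ≥ m',
      η (n + 2) ^ (-(1/2 : ℝ)) - η (n + 1) ^ (-(1/2 : ℝ))
        ≤ η (n + 1) ^ (-(1/2 : ℝ)) - η n ^ (-(1/2 : ℝ)))
    (hdiv : ¬ Summable η) :
    Filter.Tendsto (fun n => η (n + 1) ^ (-(1/2 : ℝ)) - η n ^ (-(1/2 : ℝ)))
      Filter.atTop (nhds 0) := by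
  set d : ℕ → ℝ := fun n => η (n + 1) ^ (-(1/2 : ℝ)) - η n ^ (-(1/2 : ℝ)) with hd
  set f : ℕ → ℝ := fun n => d (n + m') with hf
  have hηpos : ∀ n, 0 < η n := fun n => (hη n).1
  have hd_nonneg : ∀ n, 0 ≤ d (n + m') := by
    intro n
    have h1 : η (n + m' + 1) ≤ η (n + m') := hdec _ (by omega)
    have := Real.rpow_le_rpow_of_nonpos (hηpos (n + m' + 1)) h1
      (by norm_num : -(1/2 : ℝ) ≤ 0)
    simpa [hd] using sub_nonneg.2 this
  have hf_anti : Antitone f := by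
    apply antitone_nat_of_succ_le
    intro n
    have := hdiffdec (n + m') (by omega)
    simp only [hf, hd]
    have e1 : n + 1 + m' = n + m' + 1 := by omega
    rw [e1]
    convert this using 3 <;> omega
  have hbdd : BddBelow (Set.range f) := ⟨0, by rintro x ⟨n, rfl⟩; exact hd_nonneg n⟩
  have hL : Filter.Tendsto f Filter.atTop (nhds (⨅ n, f n)) :=
    tendsto_atTop_ciInf hf_anti hbdd
  set L := ⨅ n, f n with hLdef
  have hL0 : 0 ≤ L := le_ciInf fun n => hd_nonneg n
  -- g is the telescoping function
  set g : ℕ → ℝ := fun n => η (n + m') ^ (-(1/2 : ℝ)) with hg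
  have hLe0 : L = 0 := by
    by_contra hne
    have hLpos : 0 < L := lt_of_le_of_ne hL0 (Ne.symm hne)
    have hfL : ∀ n, L ≤ f n := fun n => ciInf_le hbdd n
    have hsum : ∀ n : ℕ, (n : ℝ) * L ≤ g n := by
      intro n
      have htel : ∑ k ∈ Finset.range n, (g (k + 1) - g k) = g n - g 0 :=
        Finset.sum_range_sub g n
      have hterm : ∀ k ∈ Finset.range n, L ≤ g (k + 1) - g k := by
        intro k _
        have : g (k + 1) - g k = f k := by
          simp only [hg, hf, hd]
          have : k + 1 + m' = k + m' + 1 := by omega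
          rw [this]
        rw [this]; exact hfL k
      have hsum' : (n : ℝ) * L ≤ g n - g 0 := by
        calc (n : ℝ) * L = ∑ _k ∈ Finset.range n, L := by
              simp [mul_comm]
          _ ≤ ∑ k ∈ Finset.range n, (g (k + 1) - g k) :=
              Finset.sum_le_sum hterm
          _ = g n - g 0 := htel
      have hg0 : 0 < g 0 := Real.rpow_pos_of_pos (hηpos _) _
      linarith
    -- derive η (n + m') ≤ L⁻² * (n)⁻² for n ≥ 1, contradiction with divergence
    have hbound : ∀ n : ℕ, η (n + 1 + m') ≤ L⁻¹ ^ 2 * ((n : ℝ) + 1)⁻¹ ^ 2 := by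
      intro n
      have hx : 0 < η (n + 1 + m') := hηpos _
      set x := η (n + 1 + m') with hxdef
      have hc : (0 : ℝ) < ((n : ℝ) + 1) * L := by positivity
      have hge : ((n : ℝ) + 1) * L ≤ x ^ (-(1/2 : ℝ)) := by
        have := hsum (n + 1)
        simpa [hg, mul_comm] using this
      have hsq : (((n : ℝ) + 1) * L) ^ 2 ≤ (x ^ (-(1/2 : ℝ))) ^ 2 :=
        pow_le_pow_left₀ hc.le hge 2
      have hxinv : (x ^ (-(1/2 : ℝ))) ^ 2 = x⁻¹ := by
        rw [← Real.rpow_natCast (x ^ (-(1/2 : ℝ))) 2, ← Real.rpow_mul hx.le]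
        norm_num [Real.rpow_neg_one]
      rw [hxinv] at hsq
      have : x ≤ ((((n : ℝ) + 1) * L) ^ 2)⁻¹ := by
        rw [← inv_inv x]
        exact inv_anti₀ (by positivity) hsq
      calc x ≤ ((((n : ℝ) + 1) * L) ^ 2)⁻¹ := this
        _ = L⁻¹ ^ 2 * ((n : ℝ) + 1)⁻¹ ^ 2 := by
            rw [mul_pow, mul_inv, mul_comm, inv_pow, inv_pow]
    have hsummable : Summable (fun n : ℕ => η (n + 1 + m')) := by
      apply Summable.of_nonneg_of_le (fun n => (hηpos _).le) hbound
      apply Summable.mul_left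
      have h2 : Summable (fun n : ℕ => ((n : ℝ))⁻¹ ^ 2) := by
        simpa [one_div] using Real.summable_one_div_nat_pow.2 (by norm_num : 1 < 2)
      have := (summable_nat_add_iff 1).2 h2
      simpa using this
    have heq : (fun n : ℕ => η (n + (1 + m'))) = fun n : ℕ => η (n + 1 + m') := by
      ext n; congr 1; omega
    exact hdiv ((summable_nat_add_iff (1 + m')).1 (heq ▸ hsummable))
  rw [hLe0] at hL
  exact (Filter.tendsto_add_atTop_iff_nat m').1 hL
end

section
/- Let (η_n) ⊂ (0,1) satisfy Assumption 1 (decreasing to 0, decreasing increments of η_n^{-1/2}, and non-summable), let θ̃ > 0 and g_{m_1} ≥ 0. Define g_{n+1} = η_{n+1}^{1/2} ( ((1-η_n)^3/η_n) · g_n/(g_n + η_n^{-1/2}) + θ̃^2 ) for n ≥ m_1. Then g_n → θ̃ as n → ∞. -/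
/-!
Put `s n = η n ^ (-1/2)` and `h n = g n * s n`. Then `g n = h n / s n` and the recursion
becomes `h (n + 1) = growthStep (η n) θ (h n)`, where
`growthStep e θ x = (1 - e) ^ 3 * x / (1 + e x) + θ ^ 2` is roughly `x - e x ^ 2 + θ ^ 2`.
On the ray `x = c * s n` one has `e x ^ 2 = c ^ 2`, so one step changes `h` by about
`θ ^ 2 - c ^ 2`, while `c * s` changes by `c * (s (n + 1) - s n)`. This increment tends to
zero: the increments of `s` decrease, and if they stayed above some `ε > 0` then `s` would grow
linearly and `∑ η n = ∑ 1 / s n ^ 2` would converge. Therefore `h - c * s` eventually becomes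
and stays nonnegative for `c < θ`, and nonpositive for `c > θ`, which gives `h / s → θ`.
-/

open Filter Topology

noncomputable def growthStep (e θ x : ℝ) : ℝ := (1 - e) ^ 3 * (x / (1 + e * x)) + θ ^ 2

section Pointwise

variable {e s θ c x y : ℝ}

lemma growthStep_mul_eq (hes : e * s ^ 2 = 1) :
    growthStep e θ (x * s) = (1 - e) ^ 3 / e * (x / (x + s)) + θ ^ 2 := by
  have hs : s ≠ 0 := by rintro rfl; simp at hes
  have hden : 1 + e * (x * s) = e * (x + s) * s := by linear_combination -hes
  rw [growthStep, hden, mul_div_mul_right _ _ hs, ← div_div]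
  ring

lemma growthStep_nonneg (he0 : 0 ≤ e) (he1 : e ≤ 1) (hx : 0 ≤ x) : 0 ≤ growthStep e θ x := by
  unfold growthStep
  have : 0 ≤ 1 - e := by linarith
  positivity

lemma growthStep_mono (he0 : 0 ≤ e) (he1 : e ≤ 1) (hx : 0 ≤ x) (hxy : x ≤ y) :
    growthStep e θ x ≤ growthStep e θ y := by
  have hx' : 0 < 1 + e * x := by positivity
  have hy' : 0 < 1 + e * y := by nlinarith
  have hfrac : x / (1 + e * x) ≤ y / (1 + e * y) := by
    rw [div_le_div_iff₀ hx' hy']; nlinarith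
  have : 0 ≤ 1 - e := by linarith
  unfold growthStep
  gcongr

lemma growthStep_le (he0 : 0 ≤ e) (hx : 0 ≤ x) :
    growthStep e θ x ≤ x - e * x ^ 2 / (1 + e * x) + θ ^ 2 := by
  have hx' : 0 < 1 + e * x := by positivity
  have hcube : (1 - e) ^ 3 ≤ 1 := by
    nlinarith [mul_nonneg he0 (add_nonneg (sq_nonneg (e - 3 / 2)) (by norm_num : (0 : ℝ) ≤ 3 / 4))]
  have hfrac : x / (1 + e * x) = x - e * x ^ 2 / (1 + e * x) := by
    field_simp; ring
  unfold growthStep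
  rw [← hfrac]
  nlinarith [div_nonneg hx hx'.le]

lemma le_growthStep (he0 : 0 ≤ e) (he3 : e ≤ 3) (hx : 0 ≤ x) :
    x - e * x ^ 2 - 3 * e * x + θ ^ 2 ≤ growthStep e θ x := by
  have hx' : 0 < 1 + e * x := by positivity
  set φ := x / (1 + e * x) with hφ
  have hφ0 : 0 ≤ φ := by positivity
  have hφx : φ ≤ x := div_le_self hx (by nlinarith)
  have hφ_ge : x - e * x ^ 2 ≤ φ := by
    rw [hφ, le_div_iff₀ hx']
    nlinarith [mul_nonneg he0 hx, mul_nonneg (mul_nonneg he0 he0) (mul_nonneg hx hx)]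
  have hcube : 1 - 3 * e ≤ (1 - e) ^ 3 := by
    nlinarith [mul_nonneg (sq_nonneg e) (sub_nonneg.2 he3)]
  unfold growthStep
  nlinarith [mul_le_mul_of_nonneg_right hcube hφ0, mul_le_mul_of_nonneg_left hφx he0]

lemma growthStep_le_max_sub (hs : 0 < s) (hes : e * s ^ 2 = 1) (he1 : e ≤ 1) (hc : 0 ≤ c)
    (hx : 0 ≤ x) : growthStep e θ x ≤ max x (c * s) - c ^ 2 / (1 + c / s) + θ ^ 2 := by
  have he0 : 0 ≤ e := by nlinarith
  set y := max x (c * s)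
  have hcs : 0 ≤ c * s := by positivity
  have hcy : c * s ≤ y := le_max_right _ _
  have hray : e * (c * s) ^ 2 / (1 + e * (c * s)) = c ^ 2 / (1 + c / s) := by
    field_simp
    linear_combination c ^ 2 * hes
  have hψ : e * (c * s) ^ 2 / (1 + e * (c * s)) ≤ e * y ^ 2 / (1 + e * y) := by
    rw [div_le_div_iff₀ (by positivity) (by positivity)]
    have hy : 0 ≤ y := hcs.trans hcy
    nlinarith [mul_nonneg (mul_nonneg he0 (sub_nonneg.2 hcy)) (add_nonneg hcs hy),
      mul_nonneg (mul_nonneg (mul_nonneg (mul_nonneg he0 he0) hcs) hy) (sub_nonneg.2 hcy)]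
  calc growthStep e θ x ≤ growthStep e θ y := growthStep_mono he0 he1 hx (le_max_left _ _)
    _ ≤ y - e * y ^ 2 / (1 + e * y) + θ ^ 2 := growthStep_le he0 (hcs.trans hcy)
    _ ≤ y - c ^ 2 / (1 + c / s) + θ ^ 2 := by linarith

lemma min_sub_le_growthStep (hs : 0 < s) (hes : e * s ^ 2 = 1) (he1 : e ≤ 1) (hc : 0 ≤ c)
    (hx : 0 ≤ x) : min x (c * s) - c ^ 2 - 3 * c / s + θ ^ 2 ≤ growthStep e θ x := by
  have he0 : 0 ≤ e := by nlinarith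
  set y := min x (c * s)
  have hy : 0 ≤ y := le_min hx (by positivity)
  have hyc : y ≤ c * s := min_le_right _ _
  have hsq : e * y ^ 2 ≤ c ^ 2 := by
    have := mul_le_mul_of_nonneg_left (pow_le_pow_left₀ hy hyc 2) he0
    linear_combination this + c ^ 2 * hes
  have hlin : e * y ≤ c / s := by
    have hray : e * (c * s) = c / s := by
      field_simp
      linear_combination c * hes
    exact hray ▸ mul_le_mul_of_nonneg_left hyc he0
  calc y - c ^ 2 - 3 * c / s + θ ^ 2 ≤ y - e * y ^ 2 - 3 * e * y + θ ^ 2 := by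
        rw [mul_div_assoc]; linarith
    _ ≤ growthStep e θ y := le_growthStep he0 (by linarith) hy
    _ ≤ growthStep e θ x := growthStep_mono he0 he1 hy (min_le_left _ _)

end Pointwise

lemma eventually_nonneg_of_drift {u : ℕ → ℝ} {δ : ℝ} (hδ : 0 < δ)
    (hu : ∀ᶠ n in atTop, min (u n) 0 + δ ≤ u (n + 1)) : ∀ᶠ n in atTop, 0 ≤ u n := by
  obtain ⟨N, hN⟩ := eventually_atTop.1 hu
  have hlin : ∀ k : ℕ, min (u N + k * δ) 0 ≤ u (N + k) := by
    intro k
    induction k with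
    | zero => simp
    | succ k ih =>
      calc min (u N + ↑(k + 1) * δ) 0 ≤ min (u N + k * δ) 0 + δ := by
            rw [← min_add_add_right]; push_cast; exact min_le_min (by linarith) (by linarith)
        _ ≤ min (u (N + k)) 0 + δ := by linarith [le_min ih (min_le_right (u N + k * δ) 0)]
        _ ≤ u (N + (k + 1)) := hN (N + k) (Nat.le_add_right _ _)
  obtain ⟨K, hK⟩ := exists_nat_ge (-u N / δ)
  filter_upwards [eventually_ge_atTop (N + K)] with n hn
  obtain ⟨k, rfl⟩ := Nat.exists_eq_add_of_le (le_of_add_le_left hn)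
  have hk : (K : ℝ) ≤ k := by exact_mod_cast Nat.le_of_add_le_add_left hn
  have : 0 ≤ u N + k * δ := by
    rw [div_le_iff₀ hδ] at hK; nlinarith
  simpa [min_eq_right this] using hlin k

lemma eventually_sub_le_of_antitone_increments {s : ℕ → ℝ} {m : ℕ} (hsm : 0 ≤ s m)
    (hanti : ∀ n ≥ m, s (n + 2) - s (n + 1) ≤ s (n + 1) - s n)
    (hdiv : ¬ Summable fun n => (s n ^ 2)⁻¹) {ε : ℝ} (hε : 0 < ε) :
    ∀ᶠ n in atTop, s (n + 1) - s n ≤ ε := by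
  by_contra hfreq
  have hincr : ∀ n ≥ m, ε ≤ s (n + 1) - s n := by
    intro n hn
    obtain ⟨k, hk, hεk⟩ := (not_eventually.1 hfreq).forall_exists_of_atTop n
    have hkn : s (k + 1) - s k ≤ s (n + 1) - s n := by
      clear hεk
      induction k, hk using Nat.le_induction with
      | base => exact le_rfl
      | succ k hnk ih => exact (hanti k (hn.trans hnk)).trans ih
    exact (not_le.1 hεk).le.trans hkn
  have hgrow : ∀ n ≥ m, s m + ε * (n - m) ≤ s n := by
    intro n hn
    induction n, hn using Nat.le_induction with
    | base => simp
    | succ n hmn ih => push_cast; linarith [hincr n hmn]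
  refine hdiv (.of_norm_bounded_eventually
    ((Real.summable_nat_pow_inv.2 one_lt_two).mul_left (4 / ε ^ 2)) ?_)
  rw [Nat.cofinite_eq_atTop]
  filter_upwards [eventually_ge_atTop (2 * m + 1)] with n hn
  have hn' : (2 * m + 1 : ℝ) ≤ n := by exact_mod_cast hn
  have hlow : ε * n / 2 ≤ s n := by nlinarith [hgrow n (by omega)]
  have hn0 : (0 : ℝ) < n := by linarith
  have hpos : 0 < ε * n / 2 := by positivity
  rw [Real.norm_of_nonneg (by positivity)]
  calc (s n ^ 2)⁻¹ ≤ ((ε * n / 2) ^ 2)⁻¹ :=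
        inv_anti₀ (by positivity) (pow_le_pow_left₀ hpos.le hlow 2)
    _ = 4 / ε ^ 2 * ((n : ℝ) ^ 2)⁻¹ := by field_simp; ring

lemma tendsto_div_of_forall_eventually {α : Type*} {l : Filter α} {h s : α → ℝ} {θ : ℝ}
    (hs : ∀ᶠ x in l, 0 < s x) (hθ : 0 < θ)
    (hupper : ∀ c, θ < c → ∀ᶠ x in l, h x ≤ c * s x)
    (hlower : ∀ c, 0 < c → c < θ → ∀ᶠ x in l, c * s x ≤ h x) :
    Tendsto (fun x => h x / s x) l (𝓝 θ) := by
  refine tendsto_order.2 ⟨fun b hb => ?_, fun b hb => ?_⟩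
  · set c := max (θ / 2) ((b + θ) / 2)
    have hc0 : 0 < c := lt_max_of_lt_left (by linarith)
    have hcθ : c < θ := max_lt (by linarith) (by linarith)
    have hbc : b < c := lt_max_of_lt_right (by linarith)
    filter_upwards [hs, hlower c hc0 hcθ] with x hsx hx
    exact hbc.trans_le ((le_div_iff₀ hsx).2 hx)
  · filter_upwards [hs, hupper ((θ + b) / 2) (by linarith)] with x hsx hx
    exact ((div_le_iff₀ hsx).2 hx).trans_lt (by linarith)

section Sequences

variable {e s h : ℕ → ℝ} {θ c : ℝ}

lemma eventually_le_mul_of_eq_growthStep (hs : ∀ n, 0 < s n) (hes : ∀ n, e n * s n ^ 2 = 1)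
    (he1 : ∀ n, e n ≤ 1) (hmono : ∀ᶠ n in atTop, s n ≤ s (n + 1)) (htop : Tendsto s atTop atTop)
    (hh : ∀ᶠ n in atTop, 0 ≤ h n) (hrec : ∀ᶠ n in atTop, h (n + 1) = growthStep (e n) θ (h n))
    (hθ : 0 ≤ θ) (hc : θ < c) : ∀ᶠ n in atTop, h n ≤ c * s n := by
  have hc0 : 0 < c := hθ.trans_lt hc
  set δ := (c ^ 2 - θ ^ 2) / 2 with hδ_def
  have hδ : 0 < δ := by nlinarith
  have hgap : ∀ᶠ n in atTop, θ ^ 2 + δ < c ^ 2 / (1 + c / s n) := by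
    have hlim : Tendsto (fun n => c ^ 2 / (1 + c / s n)) atTop (𝓝 (c ^ 2)) := by
      have hden : Tendsto (fun n => 1 + c / s n) atTop (𝓝 1) := by
        simpa using (htop.const_div_atTop c).const_add 1
      have hquot := (tendsto_const_nhds (x := c ^ 2)).div hden one_ne_zero
      rwa [div_one] at hquot
    exact hlim.eventually (lt_mem_nhds (by linarith))
  have hdrift : ∀ᶠ n in atTop, min (c * s n - h n) 0 + δ ≤ c * s (n + 1) - h (n + 1) := by
    filter_upwards [hmono, hh, hrec, hgap] with n hsn hhn hrecn hgapn
    have hstep := growthStep_le_max_sub (θ := θ) (hs n) (hes n) (he1 n) hc0.le hhn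
    rw [← sub_self (c * s n), min_sub_sub_left]
    nlinarith
  filter_upwards [eventually_nonneg_of_drift hδ hdrift] with n hn
  linarith

lemma eventually_mul_le_of_eq_growthStep (hs : ∀ n, 0 < s n) (hes : ∀ n, e n * s n ^ 2 = 1)
    (he1 : ∀ n, e n ≤ 1) (htop : Tendsto s atTop atTop)
    (hincr : ∀ ε > 0, ∀ᶠ n in atTop, s (n + 1) - s n ≤ ε)
    (hh : ∀ᶠ n in atTop, 0 ≤ h n) (hrec : ∀ᶠ n in atTop, h (n + 1) = growthStep (e n) θ (h n))
    (hc0 : 0 < c) (hc : c < θ) : ∀ᶠ n in atTop, c * s n ≤ h n := by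
  set δ := (θ ^ 2 - c ^ 2) / 3 with hδ_def
  have hδ : 0 < δ := by nlinarith
  have hsmall : ∀ᶠ n in atTop, 3 * c / s n ≤ δ :=
    (htop.const_div_atTop (3 * c)).eventually (ge_mem_nhds hδ)
  have hdrift : ∀ᶠ n in atTop, min (h n - c * s n) 0 + δ ≤ h (n + 1) - c * s (n + 1) := by
    filter_upwards [hh, hrec, hsmall, hincr (δ / c) (by positivity)] with n hhn hrecn hsn hincrn
    have hstep := min_sub_le_growthStep (θ := θ) (hs n) (hes n) (he1 n) hc0.le hhn
    have hcincr : c * (s (n + 1) - s n) ≤ δ := by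
      rwa [le_div_iff₀' hc0] at hincrn
    rw [← sub_self (c * s n), min_sub_sub_right]
    linarith
  filter_upwards [eventually_nonneg_of_drift hδ hdrift] with n hn
  linarith

theorem tendsto_div_of_eq_growthStep {m : ℕ} (hθ : 0 < θ) (hs : ∀ n, 0 < s n)
    (hes : ∀ n, e n * s n ^ 2 = 1) (he1 : ∀ n, e n ≤ 1) (hmono : ∀ᶠ n in atTop, s n ≤ s (n + 1))
    (htop : Tendsto s atTop atTop) (hincr : ∀ ε > 0, ∀ᶠ n in atTop, s (n + 1) - s n ≤ ε)
    (hh0 : 0 ≤ h m) (hrec : ∀ n ≥ m, h (n + 1) = growthStep (e n) θ (h n)) :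
    Tendsto (fun n => h n / s n) atTop (𝓝 θ) := by
  have hnonneg : ∀ n ≥ m, 0 ≤ h n := by
    intro n hn
    induction n, hn using Nat.le_induction with
    | base => exact hh0
    | succ n hmn ih =>
      rw [hrec n hmn]
      exact growthStep_nonneg (by nlinarith [hes n, hs n]) (he1 n) ih
  have hh : ∀ᶠ n in atTop, 0 ≤ h n := eventually_atTop.2 ⟨m, hnonneg⟩
  have hrec' : ∀ᶠ n in atTop, h (n + 1) = growthStep (e n) θ (h n) := eventually_atTop.2 ⟨m, hrec⟩
  exact tendsto_div_of_forall_eventually (.of_forall hs) hθ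
    (fun c hc => eventually_le_mul_of_eq_growthStep hs hes he1 hmono htop hh hrec' hθ.le hc)
    (fun c hc0 hc => eventually_mul_le_of_eq_growthStep hs hes he1 htop hincr hh hrec' hc0 hc)

end Sequences

/-- Under Assumption 1 on the weights `(η n)` (decreasing to zero from `m'`,
decreasing increments of `η n ^ (-1/2)`, non-summable), the sequence
`g (n+1) = √(η (n+1)) * ((1-η n)^3/η n * g n/(g n + η n ^ (-1/2)) + θ̃^2)`
with `g m₁ ≥ 0` converges to `θ̃`. -/
theorem am_growth_rate_limit (η g : ℕ → ℝ) (θt : ℝ) (m' m₁ : ℕ)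
    (hη : ∀ n, 0 < η n ∧ η n < 1)
    (hdec : ∀ n ≥ m', η (n + 1) ≤ η n)
    (hlim : Filter.Tendsto η Filter.atTop (nhds 0))
    (hdiffdec : ∀ n ≥ m',
      η (n + 2) ^ (-(1/2 : ℝ)) - η (n + 1) ^ (-(1/2 : ℝ))
        ≤ η (n + 1) ^ (-(1/2 : ℝ)) - η n ^ (-(1/2 : ℝ)))
    (hdiv : ¬ Summable η)
    (hθt : 0 < θt)
    (hg0 : 0 ≤ g m₁)
    (hgrec : ∀ n ≥ m₁,
      g (n + 1) = η (n + 1) ^ ((1:ℝ)/2)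
        * ((1 - η n) ^ 3 / η n * (g n / (g n + η n ^ (-(1/2) : ℝ))) + θt ^ 2)) :
    Filter.Tendsto g Filter.atTop (nhds θt) := by
  set s : ℕ → ℝ := fun n => η n ^ (-(1/2 : ℝ))
  have hs : ∀ n, 0 < s n := fun n => Real.rpow_pos_of_pos (hη n).1 _
  have hes : ∀ n, η n * s n ^ 2 = 1 := fun n => by
    rw [← Real.rpow_natCast, ← Real.rpow_mul (hη n).1.le]
    norm_num [Real.rpow_neg_one, (hη n).1.ne']
  have hη_eq : η = fun n => (s n ^ 2)⁻¹ := funext fun n => eq_inv_of_mul_eq_one_left (hes n)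
  have hmono : ∀ n ≥ m', s n ≤ s (n + 1) := fun n hn =>
    Real.rpow_le_rpow_of_nonpos (hη (n + 1)).1 (hdec n hn) (by norm_num)
  have htop : Tendsto s atTop atTop := (tendsto_rpow_neg_nhdsGT_zero (by norm_num)).comp
    (tendsto_nhdsWithin_iff.2 ⟨hlim, .of_forall fun n => (hη n).1⟩)
  have hrec : ∀ n ≥ m₁, g (n + 1) * s (n + 1) = growthStep (η n) θt (g n * s n) := fun n hn => by
    have hcancel : η (n + 1) ^ ((1 : ℝ) / 2) * s (n + 1) = 1 := by
      rw [← Real.rpow_add (hη _).1]; norm_num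
    rw [hgrec n hn, growthStep_mul_eq (hes n), mul_right_comm, hcancel, one_mul]
  have hlimit := tendsto_div_of_eq_growthStep hθt hs hes (fun n => (hη n).2.le)
    (eventually_atTop.2 ⟨m', hmono⟩) htop
    (fun ε hε => eventually_sub_le_of_antitone_increments (hs m').le hdiffdec
      (hη_eq ▸ hdiv) hε) (h := fun n => g n * s n) (mul_nonneg hg0 (hs m₁).le) hrec
  exact hlimit.congr fun n => mul_div_cancel_right₀ _ (hs n).ne'
end

section
/- Let (f_n)_{n ≥ n_δ} be maps on [0,∞) that are contractions with coefficients q_n ∈ (0,1) satisfying ∏_{k=n_δ+1}^n q_k → 0 as n → ∞, and with fixed points x_n^* satisfying ∑_n |x_{n+1}^* - x_n^*| < ∞ and x_n^* → θ̃. If g_n = f_n(g_{n-1}) for n > n_δ, then g_n → θ̃. -/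
/-!
The distance `eₙ = dist (xₙ*, gₙ)` from the orbit to the current fixed point obeys the perturbed
contraction inequality `eₙ₊₁ ≤ qₙ₊₁ eₙ + dist (xₙ₊₁*, xₙ*)`. Unrolling it from a late index `N`
bounds `eₙ` by `(∏_{N<k≤n} q_k) e_N` plus a tail of the summable drift series; the first term
vanishes as `n → ∞` and the second is small once `N` is large. Hence `eₙ → 0`, and the orbit
follows the fixed points to their limit.
-/

open Filter Topology Finset

theorem tendsto_prod_Ioc_of_tendsto_prod_Ioc {K : Type*} [Field K] [TopologicalSpace K]
    [ContinuousMul K] {a : ℕ → K} {n₀ N : ℕ} (ha : ∀ k, a k ≠ 0) (hN : n₀ ≤ N)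
    (h : Tendsto (fun n => ∏ k ∈ Ioc n₀ n, a k) atTop (𝓝 0)) :
    Tendsto (fun n => ∏ k ∈ Ioc N n, a k) atTop (𝓝 0) := by
  have hc : ∏ k ∈ Ioc n₀ N, a k ≠ 0 := prod_ne_zero_iff.2 fun k _ => ha k
  refine (zero_div (∏ k ∈ Ioc n₀ N, a k) ▸ h.div_const _).congr' ?_
  filter_upwards [eventually_ge_atTop N] with n hn
  rw [← prod_Ioc_consecutive a hN hn, mul_div_cancel_left₀ _ hc]

theorem le_prod_mul_add_sum_of_le_mul_add {a d e : ℕ → ℝ} {N : ℕ} (ha₀ : ∀ n, 0 ≤ a n)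
    (ha₁ : ∀ n, a n ≤ 1) (hd : ∀ n, 0 ≤ d n) (hstep : ∀ n ≥ N, e (n + 1) ≤ a (n + 1) * e n + d n) :
    ∀ n ≥ N, e n ≤ (∏ k ∈ Ioc N n, a k) * e N + ∑ k ∈ Ico N n, d k := by
  intro n hn
  induction n, hn using Nat.le_induction with
  | base => simp
  | succ n hn ih =>
    rw [prod_Ioc_succ_top hn, sum_Ico_succ_top hn]
    have hS : a (n + 1) * ∑ k ∈ Ico N n, d k ≤ ∑ k ∈ Ico N n, d k :=
      mul_le_of_le_one_left (sum_nonneg fun k _ => hd k) (ha₁ _)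
    calc e (n + 1) ≤ a (n + 1) * e n + d n := hstep n hn
      _ ≤ a (n + 1) * ((∏ k ∈ Ioc N n, a k) * e N + ∑ k ∈ Ico N n, d k) + d n := by
        gcongr; exact ha₀ _
      _ = (∏ k ∈ Ioc N n, a k) * a (n + 1) * e N + a (n + 1) * ∑ k ∈ Ico N n, d k + d n := by
        ring
      _ ≤ _ := by linarith

theorem tendsto_zero_of_le_mul_add {a d e : ℕ → ℝ} {n₀ : ℕ} (ha₀ : ∀ n, 0 < a n)
    (ha₁ : ∀ n, a n ≤ 1) (hd₀ : ∀ n, 0 ≤ d n) (hd : Summable d) (he : ∀ n, 0 ≤ e n)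
    (hprod : Tendsto (fun n => ∏ k ∈ Ioc n₀ n, a k) atTop (𝓝 0))
    (hstep : ∀ n ≥ n₀, e (n + 1) ≤ a (n + 1) * e n + d n) :
    Tendsto e atTop (𝓝 0) := by
  refine tendsto_order.2 ⟨fun b hb => .of_forall fun n => hb.trans_le (he n), fun ε hε => ?_⟩
  have htail : Tendsto (fun N => ∑' k, d k - ∑ k ∈ range N, d k) atTop (𝓝 0) := by
    simpa using (tendsto_const_nhds (x := ∑' k, d k)).sub hd.hasSum.tendsto_sum_nat
  obtain ⟨N, hN₀, hN⟩ :=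
    ((eventually_ge_atTop n₀).and (htail.eventually (gt_mem_nhds (half_pos hε)))).exists
  have hP : Tendsto (fun n => (∏ k ∈ Ioc N n, a k) * e N) atTop (𝓝 0) := by
    simpa using
      (tendsto_prod_Ioc_of_tendsto_prod_Ioc (fun k => (ha₀ k).ne') hN₀ hprod).mul_const (e N)
  filter_upwards [eventually_ge_atTop N, hP.eventually (gt_mem_nhds (half_pos hε))] with n hn hPn
  have hstepN : ∀ n ≥ N, e (n + 1) ≤ a (n + 1) * e n + d n := fun n hn => hstep n (hN₀.trans hn)
  calc e n ≤ (∏ k ∈ Ioc N n, a k) * e N + ∑ k ∈ Ico N n, d k :=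
        le_prod_mul_add_sum_of_le_mul_add (fun n => (ha₀ n).le) ha₁ hd₀ hstepN n hn
    _ ≤ (∏ k ∈ Ioc N n, a k) * e N + (∑' k, d k - ∑ k ∈ range N, d k) := by
        rw [sum_Ico_eq_sub _ hn]
        gcongr
        exact hd.sum_le_tsum _ fun k _ => hd₀ k
    _ < ε / 2 + ε / 2 := add_lt_add hPn hN
    _ = ε := add_halves ε

theorem dist_isFixedPt_map_le {α : Type*} [PseudoMetricSpace α] {f : α → α} {q : ℝ} {p x y : α}
    (hq₀ : 0 ≤ q) (hq₁ : q ≤ 1) (hp : Function.IsFixedPt f p)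
    (hcontr : dist (f p) (f x) ≤ q * dist p x) :
    dist p (f x) ≤ q * dist y x + dist p y :=
  calc dist p (f x) = dist (f p) (f x) := by rw [hp.eq]
    _ ≤ q * dist p x := hcontr
    _ ≤ q * (dist p y + dist y x) := by gcongr; exact dist_triangle _ _ _
    _ = q * dist y x + q * dist p y := by ring
    _ ≤ q * dist y x + dist p y := add_le_add_right (mul_le_of_le_one_left dist_nonneg hq₁) _

theorem tendsto_orbit_of_tendsto_isFixedPt {α : Type*} [PseudoMetricSpace α] {s : Set α}
    {f : ℕ → α → α} {q : ℕ → ℝ} {xs g : ℕ → α} {θ : α} {n₀ : ℕ}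
    (hq : ∀ n, 0 < q n ∧ q n ≤ 1) (hmaps : ∀ n, Set.MapsTo (f n) s s)
    (hcontr : ∀ n, ∀ x ∈ s, ∀ y ∈ s, dist (f n x) (f n y) ≤ q n * dist x y)
    (hprod : Tendsto (fun n => ∏ k ∈ Ioc n₀ n, q k) atTop (𝓝 0))
    (hfix : ∀ n, xs n ∈ s ∧ Function.IsFixedPt (f n) (xs n))
    (hsum : Summable fun n => dist (xs (n + 1)) (xs n)) (hxs : Tendsto xs atTop (𝓝 θ))
    (hg₀ : g n₀ ∈ s) (hgrec : ∀ n ≥ n₀, g (n + 1) = f (n + 1) (g n)) :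
    Tendsto g atTop (𝓝 θ) := by
  have hgs : ∀ n ≥ n₀, g n ∈ s := fun n hn =>
    Nat.le_induction hg₀ (fun n hn ih => hgrec n hn ▸ hmaps (n + 1) ih) n hn
  have hstep : ∀ n ≥ n₀, dist (xs (n + 1)) (g (n + 1)) ≤
      q (n + 1) * dist (xs n) (g n) + dist (xs (n + 1)) (xs n) := fun n hn =>
    hgrec n hn ▸ dist_isFixedPt_map_le (hq _).1.le (hq _).2 (hfix _).2
      (hcontr _ _ (hfix _).1 _ (hgs n hn))
  exact hxs.congr_dist <| tendsto_zero_of_le_mul_add (fun n => (hq n).1) (fun n => (hq n).2)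
    (fun n => dist_nonneg) hsum (fun n => dist_nonneg) hprod hstep

/-- Fixed-point tracking for iterated contractions: if `f n` are self-maps of `[0,∞)`
that are contractions with coefficients `q n` whose products vanish, with fixed
points `xs n` such that `∑ |xs (n+1) - xs n| < ∞` and `xs n → θ̃`, then any orbit
`g n = f n (g (n-1))` converges to `θ̃`. -/
theorem contraction_fixed_point_tracking (f : ℕ → ℝ → ℝ) (q xs g : ℕ → ℝ)
    (θt : ℝ) (nδ : ℕ)
    (hq : ∀ n, 0 < q n ∧ q n < 1)
    (hmap : ∀ n, ∀ x : ℝ, 0 ≤ x → 0 ≤ f n x)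
    (hcontr : ∀ n, ∀ x y : ℝ, 0 ≤ x → 0 ≤ y → |f n x - f n y| ≤ q n * |x - y|)
    (hprod : Filter.Tendsto (fun n => ∏ k ∈ Finset.Icc (nδ + 1) n, q k)
      Filter.atTop (nhds 0))
    (hfix : ∀ n, 0 ≤ xs n ∧ f n (xs n) = xs n)
    (hsum : Summable (fun n => |xs (n + 1) - xs n|))
    (hxs : Filter.Tendsto xs Filter.atTop (nhds θt))
    (hg0 : 0 ≤ g nδ)
    (hgrec : ∀ n ≥ nδ, g (n + 1) = f (n + 1) (g n)) :
    Filter.Tendsto g Filter.atTop (nhds θt) :=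
  tendsto_orbit_of_tendsto_isFixedPt (s := Set.Ici 0) (fun n => ⟨(hq n).1, (hq n).2.le⟩)
    (fun n x hx => hmap n x hx)
    (fun n x hx y hy => by simpa only [Real.dist_eq] using hcontr n x y hx hy)
    (by simpa only [Finset.Icc_add_one_left_eq_Ioc] using hprod) hfix
    (by simpa only [Real.dist_eq] using hsum) hxs hg0 hgrec
end

section
/- Let μ and ν be probability measures on a measurable space and X a random variable with law μ. Then, possibly on an enlarged probability space, there exists a random variable Y with law ν such that P(X = Y) = 1 - ‖μ - ν‖, where ‖μ - ν‖ denotes the total variation distance. -/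
/-!
Let `ρ = μ + ν`, `g = dμ/dρ` and `h = dν/dρ`. Then `μ = (g ⊓ h) ρ + (g - h)⁺ ρ` and
`ν = (g ⊓ h) ρ + (h - g)⁺ ρ`. The two excesses live on the disjoint sets `{g > h}` and
`{h > g}` and, `μ` and `ν` having the same mass, both have the same mass `a`. On every set the
difference `μ - ν` is the difference of the excesses, so it lies in `[-a, a]`, and it equals `a`
on `{g > h}`: hence `‖μ - ν‖ = a`. Put the common part `(g ⊓ h) ρ` on the diagonal and add the
product of the excesses divided by `a`. The marginals are `μ` and `ν`, and the product gives the
diagonal measure zero, so `P(X = Y) = 1 - a`.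
-/

open MeasureTheory

/-- Total variation distance `‖μ - ν‖ = sup_{A measurable} |μ(A) - ν(A)|`. -/
noncomputable def tvDist {E : Type} [MeasurableSpace E] (μ ν : Measure E) : ℝ :=
  ⨆ A : {s : Set E // MeasurableSet s}, |(μ A.1).toReal - (ν A.1).toReal|

open Set
open scoped ENNReal

namespace MeasureTheory.Measure

variable {α : Type*} [MeasurableSpace α]

section WithDensity

variable (ρ : Measure α) {f g : α → ℝ≥0∞}

lemma withDensity_inf_add_withDensity_tsub (hf : Measurable f) (hg : Measurable g) :
    ρ.withDensity (f ⊓ g) + ρ.withDensity (f - g) = ρ.withDensity f := by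
  rw [← withDensity_add_left (hf.inf hg), add_comm]
  congr 1
  funext x
  exact tsub_add_min

lemma mutuallySingular_withDensity_tsub (hf : Measurable f) (hg : Measurable g) :
    ρ.withDensity (f - g) ⟂ₘ ρ.withDensity (g - f) := by
  refine ⟨{x | f x ≤ g x}, measurableSet_le hf hg, ?_, ?_⟩
  · rw [withDensity_apply _ (measurableSet_le hf hg)]
    exact setLIntegral_eq_zero (measurableSet_le hf hg) fun x hx => tsub_eq_zero_of_le hx
  · rw [withDensity_apply _ (measurableSet_le hf hg).compl]
    exact setLIntegral_eq_zero (measurableSet_le hf hg).compl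
      fun x hx => tsub_eq_zero_of_le (le_of_not_ge hx)

end WithDensity

variable (μ ν : Measure α)

noncomputable def commonPart : Measure α :=
  (μ + ν).withDensity (μ.rnDeriv (μ + ν) ⊓ ν.rnDeriv (μ + ν))

noncomputable def excessOver : Measure α :=
  (μ + ν).withDensity (μ.rnDeriv (μ + ν) - ν.rnDeriv (μ + ν))

lemma commonPart_comm : ν.commonPart μ = μ.commonPart ν := by
  rw [commonPart, commonPart, add_comm ν μ, inf_comm]

lemma commonPart_add_excessOver [SigmaFinite μ] [SigmaFinite ν] :
    μ.commonPart ν + μ.excessOver ν = μ := by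
  rw [commonPart, excessOver, withDensity_inf_add_withDensity_tsub _ (measurable_rnDeriv _ _)
    (measurable_rnDeriv _ _), withDensity_rnDeriv_eq _ _ (AbsolutelyContinuous.rfl.add_right ν)]

lemma commonPart_add_excessOver_swap [SigmaFinite μ] [SigmaFinite ν] :
    μ.commonPart ν + ν.excessOver μ = ν := by
  rw [← commonPart_comm, commonPart_add_excessOver]

lemma mutuallySingular_excessOver : μ.excessOver ν ⟂ₘ ν.excessOver μ := by
  rw [excessOver, excessOver, add_comm ν μ]
  exact mutuallySingular_withDensity_tsub (μ + ν) (measurable_rnDeriv μ (μ + ν))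
    (measurable_rnDeriv ν (μ + ν))

instance [IsFiniteMeasure μ] [SigmaFinite ν] : IsFiniteMeasure (μ.excessOver ν) :=
  isFiniteMeasure_of_le μ <| by
    conv_rhs => rw [← commonPart_add_excessOver μ ν]
    exact Measure.le_add_left le_rfl

instance [IsFiniteMeasure μ] [SigmaFinite ν] : IsFiniteMeasure (μ.commonPart ν) :=
  isFiniteMeasure_of_le μ <| by
    conv_rhs => rw [← commonPart_add_excessOver μ ν]
    exact Measure.le_add_right le_rfl

lemma excessOver_univ_swap [IsFiniteMeasure μ] [IsFiniteMeasure ν] (h : μ univ = ν univ) :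
    μ.excessOver ν univ = ν.excessOver μ univ := by
  have hμ := congrArg (· univ) (commonPart_add_excessOver μ ν)
  have hν := congrArg (· univ) (commonPart_add_excessOver_swap μ ν)
  simp only [add_apply] at hμ hν
  exact (ENNReal.add_right_inj (measure_ne_top _ _)).mp (hμ.trans (h.trans hν.symm))

lemma toReal_sub_toReal_eq_excessOver [IsFiniteMeasure μ] [IsFiniteMeasure ν] (s : Set α) :
    (μ s).toReal - (ν s).toReal = (μ.excessOver ν s).toReal - (ν.excessOver μ s).toReal := by
  have hμ : μ s = μ.commonPart ν s + μ.excessOver ν s := by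
    rw [← add_apply, commonPart_add_excessOver]
  have hν : ν s = μ.commonPart ν s + ν.excessOver μ s := by
    rw [← add_apply, commonPart_add_excessOver_swap]
  rw [hμ, hν, ENNReal.toReal_add (measure_ne_top _ _) (measure_ne_top _ _),
    ENNReal.toReal_add (measure_ne_top _ _) (measure_ne_top _ _)]
  ring

lemma abs_toReal_sub_toReal_le_excessOver_univ [IsFiniteMeasure μ] [IsFiniteMeasure ν]
    (h : μ univ = ν univ) (s : Set α) :
    |(μ s).toReal - (ν s).toReal| ≤ (μ.excessOver ν univ).toReal := by
  have hξ : (μ.excessOver ν s).toReal ≤ (μ.excessOver ν univ).toReal :=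
    ENNReal.toReal_mono (measure_ne_top _ _) (measure_mono (subset_univ s))
  have hη : (ν.excessOver μ s).toReal ≤ (μ.excessOver ν univ).toReal := by
    rw [excessOver_univ_swap μ ν h]
    exact ENNReal.toReal_mono (measure_ne_top _ _) (measure_mono (subset_univ s))
  rw [toReal_sub_toReal_eq_excessOver, abs_sub_le_iff]
  constructor <;> linarith [ENNReal.toReal_nonneg (a := μ.excessOver ν s),
    ENNReal.toReal_nonneg (a := ν.excessOver μ s)]

lemma exists_toReal_sub_toReal_eq_excessOver_univ [IsFiniteMeasure μ] [IsFiniteMeasure ν] :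
    ∃ s, MeasurableSet s ∧ (μ s).toReal - (ν s).toReal = (μ.excessOver ν univ).toReal := by
  obtain ⟨t, ht, hξt, hηt⟩ := mutuallySingular_excessOver μ ν
  refine ⟨tᶜ, ht.compl, ?_⟩
  rw [toReal_sub_toReal_eq_excessOver, hηt, ← measure_add_measure_compl ht, hξt, zero_add,
    ENNReal.toReal_zero, sub_zero]

lemma inv_measure_univ_smul_measure_univ_smul (ξ : Measure α) [IsFiniteMeasure ξ] :
    (ξ univ)⁻¹ • ξ univ • ξ = ξ := by
  rcases eq_zero_or_neZero ξ with rfl | _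
  · simp
  · rw [smul_smul, ENNReal.inv_mul_cancel (NeZero.ne _) (measure_ne_top _ _), one_smul]

lemma map_prodMk_self_diagonal (c : Measure α) :
    c.map (fun x => (x, x)) (diagonal α) = c univ := by
  have hdiag : Measurable fun x : α => (x, x) := measurable_id.prodMk measurable_id
  refine le_antisymm ?_ ?_
  · calc c.map (fun x => (x, x)) (diagonal α) ≤ c.map (fun x => (x, x)) univ :=
          measure_mono (subset_univ _)
      _ = c univ := by rw [map_apply hdiag .univ, preimage_univ]
  · simpa [diagonal] using le_map_apply hdiag.aemeasurable (diagonal α)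

lemma MutuallySingular.prod_diagonal_eq_zero {ξ η : Measure α} [SFinite η] (h : ξ ⟂ₘ η) :
    ξ.prod η (diagonal α) = 0 := by
  obtain ⟨t, -, hξt, hηt⟩ := h
  have hsub : diagonal α ⊆ t ×ˢ t ∪ tᶜ ×ˢ tᶜ := by
    rintro ⟨x, y⟩ (rfl : x = y)
    by_cases hx : x ∈ t
    · exact .inl ⟨hx, hx⟩
    · exact .inr ⟨hx, hx⟩
  refine measure_mono_null hsub (measure_union_null ?_ ?_)
  · rw [prod_prod, hξt, zero_mul]
  · rw [prod_prod, hηt, mul_zero]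

-- If the excess vanishes, its inverse mass is `∞`, but it multiplies the zero measure.
noncomputable def maximalCoupling : Measure (α × α) :=
  (μ.commonPart ν).map (fun x => (x, x)) +
    (μ.excessOver ν univ)⁻¹ • (μ.excessOver ν).prod (ν.excessOver μ)

variable [IsFiniteMeasure μ] [IsFiniteMeasure ν]

lemma fst_maximalCoupling (h : μ univ = ν univ) : (maximalCoupling μ ν).fst = μ := by
  rw [maximalCoupling, fst_add, fst_map_prodMk measurable_id', map_id', fst, Measure.map_smul,
    map_fst_prod, ← excessOver_univ_swap μ ν h, inv_measure_univ_smul_measure_univ_smul,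
    commonPart_add_excessOver]

lemma snd_maximalCoupling (h : μ univ = ν univ) : (maximalCoupling μ ν).snd = ν := by
  rw [maximalCoupling, snd_add, snd_map_prodMk measurable_id', map_id', snd, Measure.map_smul,
    map_snd_prod, excessOver_univ_swap μ ν h, inv_measure_univ_smul_measure_univ_smul,
    commonPart_add_excessOver_swap]

lemma maximalCoupling_diagonal : maximalCoupling μ ν (diagonal α) = μ.commonPart ν univ := by
  rw [maximalCoupling, add_apply, smul_apply,
    (mutuallySingular_excessOver μ ν).prod_diagonal_eq_zero, smul_zero, add_zero,
    map_prodMk_self_diagonal]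

end MeasureTheory.Measure

open Measure

lemma tvDist_eq_excessOver_univ {E : Type} [MeasurableSpace E] (μ ν : Measure E)
    [IsFiniteMeasure μ] [IsFiniteMeasure ν] (h : μ univ = ν univ) :
    tvDist μ ν = (μ.excessOver ν univ).toReal := by
  have hle := abs_toReal_sub_toReal_le_excessOver_univ μ ν h
  obtain ⟨s, hs, hs_eq⟩ := exists_toReal_sub_toReal_eq_excessOver_univ μ ν
  refine le_antisymm (ciSup_le fun A => hle A.1) ?_
  refine le_ciSup_of_le ⟨_, forall_mem_range.mpr fun A => hle A.1⟩ ⟨s, hs⟩ ?_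
  exact hs_eq ▸ le_abs_self _

/-- Maximal coupling: for probability measures `μ` and `ν` there is a probability
space carrying random variables `X ~ μ` and `Y ~ ν` with
`P(X = Y) = 1 - ‖μ - ν‖`. -/
theorem maximal_coupling {E : Type} [MeasurableSpace E]
    (μ ν : Measure E) [IsProbabilityMeasure μ] [IsProbabilityMeasure ν] :
    ∃ (Ω : Type) (mΩ : MeasurableSpace Ω) (P : Measure Ω) (_ : IsProbabilityMeasure P)
      (X Y : Ω → E), Measurable X ∧ Measurable Y ∧
        Measure.map X P = μ ∧ Measure.map Y P = ν ∧
        (P {ω | X ω = Y ω}).toReal = 1 - tvDist μ ν := by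
  have hmass : μ univ = ν univ := by rw [measure_univ, measure_univ]
  have hfst := fst_maximalCoupling μ ν hmass
  have : IsProbabilityMeasure (maximalCoupling μ ν) := ⟨by rw [← fst_univ, hfst, measure_univ]⟩
  refine ⟨E × E, inferInstance, maximalCoupling μ ν, this, Prod.fst, Prod.snd, measurable_fst,
    measurable_snd, hfst, snd_maximalCoupling μ ν hmass, ?_⟩
  rw [show {ω : E × E | ω.1 = ω.2} = diagonal E from rfl, maximalCoupling_diagonal,
    tvDist_eq_excessOver_univ μ ν hmass, eq_sub_iff_add_eq,
    ← ENNReal.toReal_add (measure_ne_top _ _) (measure_ne_top _ _), ← add_apply,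
    commonPart_add_excessOver, measure_univ, ENNReal.toReal_one]
end

section
/- Let ν be a compactly supported probability measure on ℝ^d absolutely continuous with respect to Lebesgue measure, and let M > 0. Then there exist b, γ > 0 such that for every unit vector w and every e ∈ ℝ^d with ‖e‖ ≤ M, the ν-measure of the set { u ∈ ℝ^d : inf_{v ∈ S(w,γ)} |v^T (u + e)| > b } is at least 1/2, where S(w,γ) = { v : ‖v‖ = 1, ‖v - w‖ ≤ γ }. -/
/-!
Hyperplanes are Lebesgue-null, so for a fixed unit normal `w` and offset `c` the slab
`|⟪w, u⟫ + c| ≤ b` has `ν`-measure tending to `0` as `b → 0`. Since `ν` lives on a ball of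
radius `R`, moving `(w, c)` to `(w', c')` widens the slab on the support by at most
`‖w - w'‖ R + |c - c'|`, so compactness of the parameters `(w, c)`, `‖w‖ = 1`, `|c| ≤ M`, yields
one width `b` for which every slab has measure `< 1/2`. Off the slab with `c = ⟪w, e⟫` we
have `|⟪w, u + e⟫| > b`, and moving `w` to any `v` of the cap of radius `γ` changes
`⟪·, u + e⟫` by at most `γ (R + M) < b / 2`.
-/

open MeasureTheory Filter Topology Set Metric
open scoped RealInnerProductSpace

section Slab

variable {E : Type*} [NormedAddCommGroup E] [InnerProductSpace ℝ E]

theorem addHaar_setOf_inner_add_eq_zero [FiniteDimensional ℝ E] [MeasurableSpace E]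
    [BorelSpace E] (μ : Measure E) [μ.IsAddHaarMeasure] {w : E} (hw : w ≠ 0) (c : ℝ) :
    μ {u | ⟪w, u⟫ + c = 0} = 0 := by
  have hsurj : Function.Surjective (innerₛₗ ℝ w) :=
    LinearMap.surjective_of_ne_zero fun h ↦ hw (inner_self_eq_zero.1 (LinearMap.congr_fun h w))
  have hae : ∀ᵐ u ∂μ, innerₛₗ ℝ w u ∈ ({-c}ᶜ : Set ℝ) :=
    (ae_comp_linearMap_mem_iff _ μ volume hsurj (measurableSet_singleton _).compl).2
      (compl_mem_ae_iff.2 (measure_singleton _))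
  simpa [ae_iff, eq_neg_iff_add_eq_zero] using hae

def slab (w : E) (c b : ℝ) : Set E := {u | |⟪w, u⟫ + c| ≤ b}

@[simp]
theorem mem_slab {w u : E} {c b : ℝ} : u ∈ slab w c b ↔ |⟪w, u⟫ + c| ≤ b := Iff.rfl

theorem isClosed_slab (w : E) (c b : ℝ) : IsClosed (slab w c b) :=
  isClosed_le (by fun_prop) continuous_const

theorem slab_mono {w : E} {c b b' : ℝ} (h : b ≤ b') : slab w c b ⊆ slab w c b' :=
  fun _ hu ↦ le_trans hu h

theorem biInter_slab (w : E) (c : ℝ) : ⋂ b > (0 : ℝ), slab w c b = {u | ⟪w, u⟫ + c = 0} := by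
  ext u
  simp only [mem_iInter, mem_slab, mem_ofPred_eq]
  exact ⟨fun h ↦ abs_nonpos_iff.1 (le_of_forall_pos_le_add fun b hb ↦ by simpa using h b hb),
    fun h b hb ↦ by rw [h, abs_zero]; exact hb.le⟩

theorem tendsto_measure_slab [MeasurableSpace E] [OpensMeasurableSpace E] (ν : Measure E)
    [IsFiniteMeasure ν] (w : E) (c : ℝ) :
    Tendsto (fun b ↦ ν (slab w c b)) (𝓝[>] 0) (𝓝 (ν {u | ⟪w, u⟫ + c = 0})) := by
  rw [← biInter_slab]
  exact tendsto_measure_biInter_gt (fun b _ ↦ (isClosed_slab w c b).nullMeasurableSet)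
    (fun _ _ _ hb ↦ slab_mono hb) ⟨1, one_pos, measure_ne_top ν _⟩

theorem mem_slab_of_mem_slab_of_norm_le {w w' u : E} {c c' b R : ℝ} (hu : u ∈ slab w' c' b)
    (huR : ‖u‖ ≤ R) : u ∈ slab w c (b + ‖w - w'‖ * R + |c - c'|) := by
  have hinner : |⟪w - w', u⟫| ≤ ‖w - w'‖ * R :=
    (abs_real_inner_le_norm _ _).trans (by gcongr)
  have hsplit : ⟪w, u⟫ + c = (⟪w', u⟫ + c') + ⟪w - w', u⟫ + (c - c') := by
    rw [inner_sub_left]; ring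
  rw [mem_slab] at hu ⊢
  rw [hsplit]
  calc _ ≤ |⟪w', u⟫ + c'| + |⟪w - w', u⟫| + |c - c'| := abs_add_three _ _ _
    _ ≤ _ := by gcongr

theorem exists_pos_forall_measure_slab_lt [MeasurableSpace E] [OpensMeasurableSpace E]
    {ν : Measure E} [IsFiniteMeasure ν] {R : ℝ} (hR : ∀ᵐ u ∂ν, ‖u‖ ≤ R) {P : Set (E × ℝ)}
    (hP : IsCompact P) (hnull : ∀ p ∈ P, ν {u | ⟪p.1, u⟫ + p.2 = 0} = 0)
    {t : ENNReal} (ht : 0 < t) :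
    ∃ b > 0, ∀ p ∈ P, ν (slab p.1 p.2 b) < t := by
  suffices h : ∀ᶠ b in 𝓝 (0 : ℝ), ∀ p ∈ P, ν (slab p.1 p.2 b) < t by
    obtain ⟨b, hb, hbpos⟩ :=
      ((h.filter_mono nhdsWithin_le_nhds : ∀ᶠ b in 𝓝[>] (0 : ℝ), _).and
        self_mem_nhdsWithin).exists
    exact ⟨b, hbpos, hb⟩
  refine hP.eventually_forall_of_forall_eventually fun p hp ↦ ?_
  obtain ⟨ε, hεt, hε⟩ :=
    (((tendsto_measure_slab ν p.1 p.2).eventually (Iio_mem_nhds (hnull p hp ▸ ht))).and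
      self_mem_nhdsWithin).exists
  have hcont : Continuous fun z : ℝ × (E × ℝ) ↦ z.1 + ‖p.1 - z.2.1‖ * R + |p.2 - z.2.2| := by
    fun_prop
  have hnear : ∀ᶠ z : ℝ × (E × ℝ) in 𝓝 (0, p), z.1 + ‖p.1 - z.2.1‖ * R + |p.2 - z.2.2| < ε :=
    hcont.continuousAt.eventually (Iio_mem_nhds (by simpa using hε))
  refine hnear.mono fun z hz ↦ lt_of_le_of_lt (measure_mono_ae ?_) hεt
  filter_upwards [hR] with u huR hu
  exact slab_mono hz.le (mem_slab_of_mem_slab_of_norm_le hu huR)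

theorem lt_iInf_abs_inner_cap {w x : E} (hw : ‖w‖ = 1) {γ b : ℝ} (hγ : 0 ≤ γ)
    (h : b + γ * ‖x‖ < |⟪w, x⟫|) :
    b < ⨅ v : {v : E // ‖v‖ = 1 ∧ ‖v - w‖ ≤ γ}, |⟪v.1, x⟫| := by
  have : Nonempty {v : E // ‖v‖ = 1 ∧ ‖v - w‖ ≤ γ} := ⟨⟨w, hw, by simpa using hγ⟩⟩
  refine (show b < |⟪w, x⟫| - γ * ‖x‖ by linarith).trans_le (le_ciInf fun ⟨v, _, hvw⟩ ↦ ?_)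
  have hclose : |⟪w, x⟫| - |⟪v, x⟫| ≤ γ * ‖x‖ :=
    calc |⟪w, x⟫| - |⟪v, x⟫| ≤ |⟪w - v, x⟫| := by
          rw [inner_sub_left]; exact abs_sub_abs_le_abs_sub _ _
      _ ≤ ‖w - v‖ * ‖x‖ := abs_real_inner_le_norm _ _
      _ ≤ γ * ‖x‖ := by rw [norm_sub_rev]; gcongr
  linarith

end Slab

theorem anticoncentration_spherical_cap_general {d : ℕ}
    (ν : Measure (EuclideanSpace ℝ (Fin d))) [IsProbabilityMeasure ν]
    (hac : ν ≪ volume)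
    (hcompact : ∃ K : Set (EuclideanSpace ℝ (Fin d)), IsCompact K ∧ ν Kᶜ = 0)
    (M : ℝ) :
    ∃ b > (0:ℝ), ∃ γ > (0:ℝ),
      ∀ w : EuclideanSpace ℝ (Fin d), ‖w‖ = 1 →
      ∀ e : EuclideanSpace ℝ (Fin d), ‖e‖ ≤ M →
        (1/2 : ENNReal) ≤
          ν {u | b < ⨅ v : {v : EuclideanSpace ℝ (Fin d) // ‖v‖ = 1 ∧ ‖v - w‖ ≤ γ},
                |(inner ℝ v.1 (u + e) : ℝ)|} := by
  obtain ⟨K, hK, hKc⟩ := hcompact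
  obtain ⟨R, hKR⟩ := hK.isBounded.subset_closedBall 0
  have hR : ∀ᵐ u ∂ν, ‖u‖ ≤ R :=
    mem_of_superset (mem_ae_iff.2 hKc) fun u hu ↦ by simpa using hKR hu
  obtain ⟨b, hb, hslab⟩ := exists_pos_forall_measure_slab_lt hR
    ((isCompact_sphere 0 1).prod (isCompact_Icc (a := -M) (b := M)))
    (fun p hp ↦ hac (addHaar_setOf_inner_add_eq_zero volume (ne_of_mem_sphere hp.1 one_ne_zero) _))
    (by norm_num : (0 : ENNReal) < 1 / 2)
  obtain ⟨γ, hγ, hγb⟩ := exists_pos_mul_lt (half_pos hb) (R + M)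
  refine ⟨b / 2, half_pos hb, γ, hγ, fun w hw e he ↦ ?_⟩
  have hwe : |⟪w, e⟫| ≤ M := (abs_real_inner_le_norm w e).trans (by rw [hw, one_mul]; exact he)
  have hsmall : ν (slab w ⟪w, e⟫ b) < 1 / 2 :=
    hslab (w, ⟪w, e⟫) ⟨by simpa using hw, abs_le.1 hwe⟩
  calc (1 / 2 : ENNReal) = 1 - 1 / 2 := by rw [one_div, ENNReal.one_sub_inv_two]
    _ ≤ ν (slab w ⟪w, e⟫ b)ᶜ := by
      rw [prob_compl_eq_one_sub (isClosed_slab _ _ _).measurableSet]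
      exact tsub_le_tsub_left hsmall.le 1
    _ ≤ _ := by
      refine measure_mono_ae ?_
      filter_upwards [hR] with u huR hu
      replace hu : b < |⟪w, u⟫ + ⟪w, e⟫| := not_le.1 hu
      have hue : ‖u + e‖ ≤ R + M := (norm_add_le u e).trans (add_le_add huR he)
      refine lt_iInf_abs_inner_cap hw hγ.le ?_
      rw [inner_add_right]
      linarith [mul_le_mul_of_nonneg_left hue hγ.le]

/-- Uniform anti-concentration over spherical caps: if `ν` is a compactly supported
probability measure on `ℝ^d`, absolutely continuous w.r.t. Lebesgue measure, and
`M > 0`, then there are `b, γ > 0` such that for every unit vector `w` and every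
shift `e` with `‖e‖ ≤ M`, the `ν`-measure of
`{u : inf_{v ∈ S(w,γ)} |⟪v, u + e⟫| > b}` is at least `1/2`. -/
theorem anticoncentration_spherical_cap {d : ℕ}
    (ν : Measure (EuclideanSpace ℝ (Fin d))) [IsProbabilityMeasure ν]
    (hac : ν ≪ volume)
    (hcompact : ∃ K : Set (EuclideanSpace ℝ (Fin d)), IsCompact K ∧ ν Kᶜ = 0)
    (M : ℝ) (hM : 0 < M) :
    ∃ b > (0:ℝ), ∃ γ > (0:ℝ),
      ∀ w : EuclideanSpace ℝ (Fin d), ‖w‖ = 1 →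
      ∀ e : EuclideanSpace ℝ (Fin d), ‖e‖ ≤ M →
        (1/2 : ENNReal) ≤
          ν {u | b < ⨅ v : {v : EuclideanSpace ℝ (Fin d) // ‖v‖ = 1 ∧ ‖v - w‖ ≤ γ},
                |(inner ℝ v.1 (u + e) : ℝ)|} :=
  anticoncentration_spherical_cap_general ν hac hcompact M
end

section
/- Let (Z_n) satisfy Z_{n+1} = θ W̃_{n+1} + U_n Z_n where U_n = (1-η_n)(1 + η_n(Z_n^2-1))^{-1/2}. If Z_n^2 ≤ η_n^{-γ} with γ ∈ (0, 2/3) and η_n ∈ (0,1), then 1 - c_1 η_n^{1-γ} ≤ U_n ≤ 1, where c_1 = 2 sup_n (1-η_n)^{-1/2}. -/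
/-!
Write `U = (1 - η) / √s` with `s = 1 - η + η Z²`. Since `s ≥ 1 - η ≥ (1 - η)²`, we get `U ≤ 1`.
With `t = η^(1-γ)` we have `η ≤ t` and `η Z² ≤ t`, so `√s ≤ √(1 + t) ≤ 1 + t/2` and
`(1 - 2t)(1 + t/2) ≤ 1 - t ≤ 1 - η`, i.e. `1 - 2t ≤ U`. Finally `c₁ ≥ 2` because every
`(1 - η)^(-1/2)` is at least `1`.
-/

open Real

lemma div_sqrt_one_add_mul_sub_one_le_one {η x : ℝ} (hη₀ : 0 ≤ η) (hη₁ : η ≤ 1) (hx : 0 ≤ x) :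
    (1 - η) / √(1 + η * (x - 1)) ≤ 1 := by
  have hsq : (1 - η) ^ 2 ≤ 1 + η * (x - 1) := by nlinarith [mul_nonneg hη₀ hx]
  exact div_le_one_of_le₀ ((le_sqrt (by linarith) (by nlinarith)).2 hsq) (sqrt_nonneg _)

lemma one_sub_two_mul_le_div_sqrt {η x t : ℝ} (hη₀ : 0 ≤ η) (hη₁ : η < 1) (hx : 0 ≤ x)
    (hηt : η ≤ t) (hxt : η * x ≤ t) :
    1 - 2 * t ≤ (1 - η) / √(1 + η * (x - 1)) := by
  have hs : 0 < 1 + η * (x - 1) := by nlinarith [mul_nonneg hη₀ hx]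
  have hsqrt : √(1 + η * (x - 1)) ≤ 1 + t / 2 :=
    sqrt_le_iff.2 ⟨by linarith, by nlinarith⟩
  rw [le_div_iff₀ (sqrt_pos.2 hs)]
  rcases le_or_gt (1 - 2 * t) 0 with hneg | hpos
  · nlinarith [sqrt_nonneg (1 + η * (x - 1))]
  · calc (1 - 2 * t) * √(1 + η * (x - 1)) ≤ (1 - 2 * t) * (1 + t / 2) := by gcongr
      _ ≤ 1 - η := by nlinarith

lemma two_le_two_mul_iSup_one_sub_rpow_neg_half {η : ℕ → ℝ} (hη : ∀ n, 0 < η n ∧ η n < 1)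
    (hbdd : BddAbove (Set.range fun n => (1 - η n) ^ (-(1/2) : ℝ))) :
    2 ≤ 2 * ⨆ n, (1 - η n) ^ (-(1/2) : ℝ) := by
  have hone : 1 ≤ (1 - η 0) ^ (-(1/2) : ℝ) :=
    one_le_rpow_of_pos_of_le_one_of_nonpos (by linarith [(hη 0).2]) (by linarith [(hη 0).1])
      (by norm_num)
  linarith [le_ciSup_of_le hbdd 0 hone]

lemma mul_rpow_neg_eq_rpow_one_sub {x : ℝ} (hx : 0 < x) (γ : ℝ) :
    x * x ^ (-γ) = x ^ (1 - γ) := by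
  rw [sub_eq_add_neg, rpow_add hx, rpow_one]

lemma self_le_rpow_one_sub {x γ : ℝ} (hx₀ : 0 < x) (hx₁ : x ≤ 1) (hγ : 0 ≤ γ) :
    x ≤ x ^ (1 - γ) := by
  simpa using rpow_le_rpow_of_exponent_ge hx₀ hx₁ (by linarith : 1 - γ ≤ 1)

theorem am_multiplicative_factor_bound_general (η Z U : ℕ → ℝ) (γ c₁ : ℝ)
    (hη : ∀ n, 0 < η n ∧ η n < 1)
    (hγ : 0 < γ ∧ γ < 2/3)
    (hU : ∀ n, U n = (1 - η n) / Real.sqrt (1 + η n * (Z n ^ 2 - 1)))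
    (hbdd : BddAbove (Set.range fun n => (1 - η n) ^ (-(1/2) : ℝ)))
    (hc₁ : c₁ = 2 * ⨆ n, (1 - η n) ^ (-(1/2) : ℝ)) :
    ∀ n, Z n ^ 2 ≤ η n ^ (-γ) →
      1 - c₁ * η n ^ (1 - γ) ≤ U n ∧ U n ≤ 1 := by
  intro n hZn
  obtain ⟨hη₀, hη₁⟩ := hη n
  have hc₁_two : 2 ≤ c₁ := hc₁ ▸ two_le_two_mul_iSup_one_sub_rpow_neg_half hη hbdd
  have ht₀ : 0 ≤ η n ^ (1 - γ) := rpow_nonneg hη₀.le _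
  have hZt : η n * Z n ^ 2 ≤ η n ^ (1 - γ) :=
    mul_rpow_neg_eq_rpow_one_sub hη₀ γ ▸ mul_le_mul_of_nonneg_left hZn hη₀.le
  have hlower := one_sub_two_mul_le_div_sqrt hη₀.le hη₁ (sq_nonneg (Z n))
    (self_le_rpow_one_sub hη₀ hη₁.le hγ.1.le) hZt
  rw [hU n]
  exact ⟨(sub_le_sub_left (mul_le_mul_of_nonneg_right hc₁_two ht₀) 1).trans hlower,
    div_sqrt_one_add_mul_sub_one_le_one hη₀.le hη₁.le (sq_nonneg _)⟩

/-- If `Z (n+1) = θ * W (n+1) + U n * Z n` with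
`U n = (1 - η n) * (1 + η n * (Z n ^ 2 - 1))^{-1/2}`, `η n ∈ (0,1)`, and
`Z n ^ 2 ≤ η n ^ (-γ)` for some `γ ∈ (0, 2/3)`, then
`1 - c₁ * η n ^ (1-γ) ≤ U n ≤ 1` where `c₁ = 2 * sup_n (1 - η n)^{-1/2}`. -/
theorem am_multiplicative_factor_bound (η Z W U : ℕ → ℝ) (θ γ c₁ : ℝ)
    (hη : ∀ n, 0 < η n ∧ η n < 1)
    (hθ : 0 < θ)
    (hγ : 0 < γ ∧ γ < 2/3)
    (hU : ∀ n, U n = (1 - η n) / Real.sqrt (1 + η n * (Z n ^ 2 - 1)))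
    (hZ : ∀ n, Z (n + 1) = θ * W (n + 1) + U n * Z n)
    (hbdd : BddAbove (Set.range fun n => (1 - η n) ^ (-(1/2) : ℝ)))
    (hc₁ : c₁ = 2 * ⨆ n, (1 - η n) ^ (-(1/2) : ℝ)) :
    ∀ n, Z n ^ 2 ≤ η n ^ (-γ) →
      1 - c₁ * η n ^ (1 - γ) ≤ U n ∧ U n ≤ 1 :=
  am_multiplicative_factor_bound_general η Z U γ c₁ hη hγ hU hbdd hc₁
end
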